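/- arXiv:1804.03062 — 2 statements merged into one kernel-verified Lean document; each statement's English description precedes it below -/
import Mathlib

section
/- For binary X, Y, W with logistic models logit P(Y=1|X=x,W=w) = β0 + βx·x + βw·w + βxw·x·w and logit P(W=1|X=x) = γ0 + γx·x, the marginal log cross-product ratio satisfies log cpr(Y,X) = βx + βxw + log RR_{W|Y,X=0} − log RR_{W|Y,X=1}, where cpr(Y,X) = [P(Y=1|X=1)P(Y=0|X=0)]/[P(Y=0|X=1)P(Y=1|X=0)] and RR_{W|Y,X=x} = P(W=1|Y=1,X=x)/P(W=1|Y=0,X=x). -/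
noncomputable def expit (t : ℝ) : ℝ := Real.exp t / (1 + Real.exp t)

/-- `P(Y=1 | X=x, W=w)` under the logistic model. -/
noncomputable def pY (β0 βx βw βxw x w : ℝ) : ℝ := expit (β0 + βx * x + βw * w + βxw * x * w)

/-- `P(W=1 | X=x)` under the logistic model. -/
noncomputable def pW (γ0 γx x : ℝ) : ℝ := expit (γ0 + γx * x)

/-- joint conditional probability `P(Y=y, W=w | X=x)` induced by the two logistic models. -/
noncomputable def jnt (β0 βx βw βxw γ0 γx x : ℝ) (y w : Bool) : ℝ :=
  (if y then pY β0 βx βw βxw x (if w then 1 else 0)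
   else 1 - pY β0 βx βw βxw x (if w then 1 else 0)) *
  (if w then pW γ0 γx x else 1 - pW γ0 γx x)

/-- `P(W=w | Y=y, X=x)` obtained via Bayes' theorem. -/
noncomputable def pWgYX (β0 βx βw βxw γ0 γx x : ℝ) (y w : Bool) : ℝ :=
  jnt β0 βx βw βxw γ0 γx x y w /
    (jnt β0 βx βw βxw γ0 γx x y true + jnt β0 βx βw βxw γ0 γx x y false)

/-- marginal (over `W`) probability `P(Y=y | X=x)`. -/
noncomputable def pYgX (β0 βx βw βxw γ0 γx x : ℝ) (y : Bool) : ℝ :=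
  jnt β0 βx βw βxw γ0 γx x y true + jnt β0 βx βw βxw γ0 γx x y false

/-- `g_y(x)`, the conditional log odds of `W` given `Y=y, X=x`. -/
noncomputable def g (β0 βx βw βxw γ0 γx : ℝ) (y : Bool) (x : ℝ) : ℝ :=
  Real.log (pWgYX β0 βx βw βxw γ0 γx x y true / pWgYX β0 βx βw βxw γ0 γx x y false)

/-- the marginal log odds of `Y` given `X=x`. -/
noncomputable def margLogit (β0 βx βw βxw γ0 γx : ℝ) (x : ℝ) : ℝ :=
  Real.log (pYgX β0 βx βw βxw γ0 γx x true / pYgX β0 βx βw βxw γ0 γx x false)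

/-- `β(x)`, the marginal log-odds effect of `X` on `Y`. -/
noncomputable def betaMarg (β0 βx βw βxw γ0 γx : ℝ) (x : ℝ) : ℝ :=
  deriv (margLogit β0 βx βw βxw γ0 γx) x


/- Bayes' theorem turns the relative risk of `W` across `Y` into the conditional odds ratio of `Y`
across `W` (which is `exp` of the linear predictor) divided by the marginal odds of `Y`, so
`log RR_{W|Y,X=x} = β0 + βx x + βw + βxw x − margLogit x`. The intercept and `βw` cancel in the
difference over `x = 0, 1`, and the difference of marginal logits is `log cpr(Y,X)`. -/

lemma expit_pos (t : ℝ) : 0 < expit t := by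
  unfold expit
  positivity

lemma one_sub_expit_pos (t : ℝ) : 0 < 1 - expit t := by
  have h : 0 < 1 + Real.exp t := by positivity
  rw [expit, sub_pos, div_lt_one h]
  linarith

lemma expit_div_one_sub_expit (t : ℝ) : expit t / (1 - expit t) = Real.exp t := by
  have h : 1 + Real.exp t ≠ 0 := by positivity
  unfold expit
  field_simp
  ring

section LogisticModel

variable (β0 βx βw βxw γ0 γx x : ℝ)

lemma jnt_pos (y w : Bool) : 0 < jnt β0 βx βw βxw γ0 γx x y w := by
  cases y <;> cases w <;>
    exact mul_pos (by simp only [pY, expit_pos, one_sub_expit_pos, if_true, Bool.false_eq_true, if_false])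
      (by simp only [pW, expit_pos, one_sub_expit_pos, if_true, Bool.false_eq_true, if_false])

lemma pYgX_pos (y : Bool) : 0 < pYgX β0 βx βw βxw γ0 γx x y :=
  add_pos (jnt_pos ..) (jnt_pos ..)

lemma jnt_true_div_jnt_false (w : Bool) :
    jnt β0 βx βw βxw γ0 γx x true w / jnt β0 βx βw βxw γ0 γx x false w =
      Real.exp (β0 + βx * x + βw * (if w then 1 else 0) + βxw * x * (if w then 1 else 0)) := by
  have hW : (if w then pW γ0 γx x else 1 - pW γ0 γx x) ≠ 0 := by
    cases w
    · exact (one_sub_expit_pos _).ne'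
    · exact (expit_pos _).ne'
  simp only [jnt, if_true, Bool.false_eq_true, if_false]
  rw [mul_div_mul_right _ _ hW, pY, expit_div_one_sub_expit]

lemma log_pWgYX_true_div_false (w : Bool) :
    Real.log (pWgYX β0 βx βw βxw γ0 γx x true w / pWgYX β0 βx βw βxw γ0 γx x false w) =
      β0 + βx * x + βw * (if w then 1 else 0) + βxw * x * (if w then 1 else 0)
        - margLogit β0 βx βw βxw γ0 γx x := by
  have hBayes : pWgYX β0 βx βw βxw γ0 γx x true w / pWgYX β0 βx βw βxw γ0 γx x false w =
      (jnt β0 βx βw βxw γ0 γx x true w / jnt β0 βx βw βxw γ0 γx x false w) /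
        (pYgX β0 βx βw βxw γ0 γx x true / pYgX β0 βx βw βxw γ0 γx x false) :=
    div_div_div_comm ..
  rw [hBayes, jnt_true_div_jnt_false, Real.log_div (Real.exp_ne_zero _)
    (div_pos (pYgX_pos ..) (pYgX_pos ..)).ne', Real.log_exp, margLogit]

lemma log_cpr_eq_margLogit_sub :
    Real.log ((pYgX β0 βx βw βxw γ0 γx 1 true * pYgX β0 βx βw βxw γ0 γx 0 false) /
              (pYgX β0 βx βw βxw γ0 γx 1 false * pYgX β0 βx βw βxw γ0 γx 0 true)) =
      margLogit β0 βx βw βxw γ0 γx 1 - margLogit β0 βx βw βxw γ0 γx 0 := by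
  have h := fun x y ↦ (pYgX_pos β0 βx βw βxw γ0 γx x y).ne'
  rw [margLogit, margLogit, ← Real.log_div (div_ne_zero (h 1 true) (h 1 false))
    (div_ne_zero (h 0 true) (h 0 false))]
  congr 1
  field_simp

end LogisticModel

/-- For binary `X`: `log cpr(Y,X) = βx + βxw + log RR_{W|Y,X=0} − log RR_{W|Y,X=1}`,
where `RR_{W|Y,X=x} = P(W=1|Y=1,X=x)/P(W=1|Y=0,X=x)` (Equation (6) of the paper). -/
theorem log_cpr_decomposition (β0 βx βw βxw γ0 γx : ℝ) :
    Real.log ((pYgX β0 βx βw βxw γ0 γx 1 true * pYgX β0 βx βw βxw γ0 γx 0 false) /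
              (pYgX β0 βx βw βxw γ0 γx 1 false * pYgX β0 βx βw βxw γ0 γx 0 true))
      = βx + βxw
        + Real.log (pWgYX β0 βx βw βxw γ0 γx 0 true true / pWgYX β0 βx βw βxw γ0 γx 0 false true)
        - Real.log (pWgYX β0 βx βw βxw γ0 γx 1 true true / pWgYX β0 βx βw βxw γ0 γx 1 false true) := by
  rw [log_cpr_eq_margLogit_sub, log_pWgYX_true_div_false, log_pWgYX_true_div_false]
  simp only [if_true]
  ring
end

section
/- Under the logistic models with an additional covariate vector C = (C1,...,Cp) entering both models with main effects and X-by-C interactions (coefficients βxc_j in the Y-model, γxc_j in the W-model), the conditional marginal effect β(x,c) := ∂/∂x log[P(Y=1|X=x,C=c)/P(Y=0|X=x,C=c)] equals βx{1 − Δy(x,c)Δw(x,c)} + βxw{P(W=1|Y=1,X=x,C=c) − Δw(x,c)P(Y=1|W=1,X=x,C=c)} + (γx + Σ_j γxc_j c_j)Δw(x,c) + {1 − Δy(x,c)Δw(x,c)}Σ_j βxc_j c_j. -/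
/-- `P(Y=1 | X=x, W=w, C=c)` under the logistic model with covariates and `X`-by-`C`
interactions. -/
noncomputable def pYc (p : ℕ) (β0 βx βw βxw : ℝ) (βc βxc c : Fin p → ℝ) (x w : ℝ) : ℝ :=
  expit (β0 + βx * x + βw * w + βxw * x * w + ∑ j, (βc j * c j + βxc j * c j * x))

/-- `P(W=1 | X=x, C=c)` under the logistic model with covariates and `X`-by-`C`
interactions. -/
noncomputable def pWc (p : ℕ) (γ0 γx : ℝ) (γc γxc c : Fin p → ℝ) (x : ℝ) : ℝ :=
  expit (γ0 + γx * x + ∑ j, (γc j * c j + γxc j * c j * x))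

/-- joint conditional probability `P(Y=y, W=w | X=x, C=c)`. -/
noncomputable def jntc (p : ℕ) (β0 βx βw βxw : ℝ) (βc βxc : Fin p → ℝ) (γ0 γx : ℝ)
    (γc γxc c : Fin p → ℝ) (x : ℝ) (y w : Bool) : ℝ :=
  (if y then pYc p β0 βx βw βxw βc βxc c x (if w then 1 else 0)
   else 1 - pYc p β0 βx βw βxw βc βxc c x (if w then 1 else 0)) *
  (if w then pWc p γ0 γx γc γxc c x else 1 - pWc p γ0 γx γc γxc c x)

/-- `P(W=w | Y=y, X=x, C=c)` via Bayes' theorem. -/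
noncomputable def pWgYXc (p : ℕ) (β0 βx βw βxw : ℝ) (βc βxc : Fin p → ℝ) (γ0 γx : ℝ)
    (γc γxc c : Fin p → ℝ) (x : ℝ) (y w : Bool) : ℝ :=
  jntc p β0 βx βw βxw βc βxc γ0 γx γc γxc c x y w /
    (jntc p β0 βx βw βxw βc βxc γ0 γx γc γxc c x y true +
      jntc p β0 βx βw βxw βc βxc γ0 γx γc γxc c x y false)

/-- marginal (over `W`) log odds of `Y` given `X=x, C=c`. -/
noncomputable def margLogitc (p : ℕ) (β0 βx βw βxw : ℝ) (βc βxc : Fin p → ℝ) (γ0 γx : ℝ)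
    (γc γxc c : Fin p → ℝ) (x : ℝ) : ℝ :=
  Real.log ((jntc p β0 βx βw βxw βc βxc γ0 γx γc γxc c x true true +
      jntc p β0 βx βw βxw βc βxc γ0 γx γc γxc c x true false) /
    (jntc p β0 βx βw βxw βc βxc γ0 γx γc γxc c x false true +
      jntc p β0 βx βw βxw βc βxc γ0 γx γc γxc c x false false))

open Real Finset

lemma expit_eq_sigmoid : expit = sigmoid := by
  funext t
  rw [expit, sigmoid_def, exp_neg]
  field_simp
  ring

lemma expit_mem_Ioo (t : ℝ) : expit t ∈ Set.Ioo 0 1 :=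
  expit_eq_sigmoid ▸ ⟨sigmoid_pos t, sigmoid_lt_one t⟩

lemma HasDerivAt.expit {f : ℝ → ℝ} {f' x : ℝ} (hf : HasDerivAt f f' x) :
    HasDerivAt (fun t => expit (f t)) (f' * expit (f x) * (1 - expit (f x))) x := by
  rw [expit_eq_sigmoid]
  exact ((hasDerivAt_sigmoid (f x)).comp x hf).congr_deriv (by ring)

lemma HasDerivAt.log_odds {f : ℝ → ℝ} {f' x : ℝ} (hf : HasDerivAt f f' x) (h0 : f x ≠ 0)
    (h1 : f x ≠ 1) :
    HasDerivAt (fun t => Real.log (f t / (1 - f t))) (f' / (f x * (1 - f x))) x := by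
  have h1' : 1 - f x ≠ 0 := sub_ne_zero.mpr (Ne.symm h1)
  refine ((hf.div (hf.const_sub 1) h1').log (div_ne_zero h0 h1')).congr_deriv ?_
  simp only [Pi.div_apply]
  field_simp
  ring

lemma hasDerivAt_affine_sum {ι : Type*} [Fintype ι] (a b : ℝ) (u v : ι → ℝ) (x : ℝ) :
    HasDerivAt (fun t => a + b * t + ∑ j, (u j + v j * t)) (b + ∑ j, v j) x := by
  have h : (fun t => a + b * t + ∑ j, (u j + v j * t))
      = fun t => (a + ∑ j, u j) + (b + ∑ j, v j) * t := by
    funext t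
    rw [sum_add_distrib, ← sum_mul]
    ring
  rw [h]
  exact (((hasDerivAt_id x).const_mul _).const_add _).congr_deriv (mul_one _)

section BernoulliMixture

/-- Joint law of `(Y, W)` when `P(W=1) = q` and `P(Y=1 | W=w) = p_w`. -/
noncomputable def mixJoint (p₁ p₀ q : ℝ) (y w : Bool) : ℝ :=
  (if y then (if w then p₁ else p₀) else 1 - if w then p₁ else p₀) * (if w then q else 1 - q)

noncomputable def mixPosterior (p₁ p₀ q : ℝ) (y w : Bool) : ℝ :=
  mixJoint p₁ p₀ q y w / (mixJoint p₁ p₀ q y true + mixJoint p₁ p₀ q y false)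

noncomputable def mixLogOdds (p₁ p₀ q : ℝ) : ℝ :=
  log ((mixJoint p₁ p₀ q true true + mixJoint p₁ p₀ q true false) /
    (mixJoint p₁ p₀ q false true + mixJoint p₁ p₀ q false false))

variable (p₁ p₀ q : ℝ)

lemma mixLogOdds_eq :
    mixLogOdds p₁ p₀ q = log ((p₁ * q + p₀ * (1 - q)) / (1 - (p₁ * q + p₀ * (1 - q)))) := by
  simp only [mixLogOdds, mixJoint, if_true, if_false, Bool.false_eq_true]
  congr 2
  ring

lemma mix_mem_Ioo (hp₁ : p₁ ∈ Set.Ioo 0 1) (hp₀ : p₀ ∈ Set.Ioo 0 1) (hq : q ∈ Set.Ioo 0 1) :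
    p₁ * q + p₀ * (1 - q) ∈ Set.Ioo 0 1 := by
  obtain ⟨hp₁0, hp₁1⟩ := hp₁
  obtain ⟨hp₀0, hp₀1⟩ := hp₀
  obtain ⟨hq0, hq1⟩ := hq
  constructor <;> nlinarith [mul_pos hp₁0 hq0, mul_pos hp₀0 (sub_pos.mpr hq1)]

lemma mix_slope_decomposition (s₁ s₀ s : ℝ) (hm0 : p₁ * q + p₀ * (1 - q) ≠ 0)
    (hm1 : p₁ * q + p₀ * (1 - q) ≠ 1) :
    (s₁ * p₁ * (1 - p₁) * q + s₀ * p₀ * (1 - p₀) * (1 - q) + s * q * (1 - q) * (p₁ - p₀)) /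
        ((p₁ * q + p₀ * (1 - q)) * (1 - (p₁ * q + p₀ * (1 - q))))
      = s₀ * (1 - (p₁ - p₀) *
            (mixPosterior p₁ p₀ q true true - mixPosterior p₁ p₀ q false true))
        + (s₁ - s₀) * (mixPosterior p₁ p₀ q true true -
            (mixPosterior p₁ p₀ q true true - mixPosterior p₁ p₀ q false true) * p₁)
        + s * (mixPosterior p₁ p₀ q true true - mixPosterior p₁ p₀ q false true) := by
  have h1m : (1 - p₁) * q + (1 - p₀) * (1 - q) ≠ 0 := by
    contrapose! hm1
    linear_combination -hm1
  simp only [mixPosterior, mixJoint, if_true, if_false, Bool.false_eq_true]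
  field_simp
  ring

variable {p₁ p₀ q : ℝ → ℝ} {s₁ s₀ s x : ℝ}

theorem hasDerivAt_mixLogOdds (hp₁ : HasDerivAt p₁ (s₁ * p₁ x * (1 - p₁ x)) x)
    (hp₀ : HasDerivAt p₀ (s₀ * p₀ x * (1 - p₀ x)) x) (hq : HasDerivAt q (s * q x * (1 - q x)) x)
    (hm0 : p₁ x * q x + p₀ x * (1 - q x) ≠ 0) (hm1 : p₁ x * q x + p₀ x * (1 - q x) ≠ 1) :
    HasDerivAt (fun t => mixLogOdds (p₁ t) (p₀ t) (q t))
      (s₀ * (1 - (p₁ x - p₀ x) * (mixPosterior (p₁ x) (p₀ x) (q x) true true -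
            mixPosterior (p₁ x) (p₀ x) (q x) false true))
        + (s₁ - s₀) * (mixPosterior (p₁ x) (p₀ x) (q x) true true -
            (mixPosterior (p₁ x) (p₀ x) (q x) true true -
              mixPosterior (p₁ x) (p₀ x) (q x) false true) * p₁ x)
        + s * (mixPosterior (p₁ x) (p₀ x) (q x) true true -
            mixPosterior (p₁ x) (p₀ x) (q x) false true)) x := by
  have hm : HasDerivAt (fun t => p₁ t * q t + p₀ t * (1 - q t))
      (s₁ * p₁ x * (1 - p₁ x) * q x + s₀ * p₀ x * (1 - p₀ x) * (1 - q x)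
        + s * q x * (1 - q x) * (p₁ x - p₀ x)) x :=
    ((hp₁.mul hq).add (hp₀.mul (hq.const_sub 1))).congr_deriv (by ring)
  simp only [mixLogOdds_eq]
  rw [← mix_slope_decomposition _ _ _ _ _ _ hm0 hm1]
  exact hm.log_odds hm0 hm1

end BernoulliMixture

section LogisticModels

variable (p : ℕ) (β0 βx βw βxw : ℝ) (βc βxc : Fin p → ℝ) (γ0 γx : ℝ) (γc γxc c : Fin p → ℝ)

lemma hasDerivAt_pYc (w x : ℝ) :
    HasDerivAt (fun t => pYc p β0 βx βw βxw βc βxc c t w)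
      ((βx + βxw * w + ∑ j, βxc j * c j) * pYc p β0 βx βw βxw βc βxc c x w *
        (1 - pYc p β0 βx βw βxw βc βxc c x w)) x := by
  have hpYc : ∀ t, pYc p β0 βx βw βxw βc βxc c t w
      = expit (β0 + βw * w + (βx + βxw * w) * t + ∑ j, (βc j * c j + βxc j * c j * t)) :=
    fun t => congrArg expit (by ring)
  simp only [hpYc]
  exact (hasDerivAt_affine_sum (β0 + βw * w) (βx + βxw * w) (fun j => βc j * c j)
    (fun j => βxc j * c j) x).expit

lemma hasDerivAt_pWc (x : ℝ) :
    HasDerivAt (fun t => pWc p γ0 γx γc γxc c t)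
      ((γx + ∑ j, γxc j * c j) * pWc p γ0 γx γc γxc c x * (1 - pWc p γ0 γx γc γxc c x)) x := by
  simp only [pWc]
  exact (hasDerivAt_affine_sum γ0 γx (fun j => γc j * c j) (fun j => γxc j * c j) x).expit

lemma jntc_eq_mixJoint (x : ℝ) (y w : Bool) :
    jntc p β0 βx βw βxw βc βxc γ0 γx γc γxc c x y w
      = mixJoint (pYc p β0 βx βw βxw βc βxc c x 1) (pYc p β0 βx βw βxw βc βxc c x 0)
          (pWc p γ0 γx γc γxc c x) y w := by
  cases y <;> cases w <;> simp [jntc, mixJoint]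

end LogisticModels

/-- Decomposition of the conditional marginal effect `β(x,c)` in the presence of covariates
with `X`-by-`C` interactions (Equation (5) of the paper). -/
theorem marginal_effect_decomposition_covariates
    (p : ℕ) (β0 βx βw βxw : ℝ) (βc βxc : Fin p → ℝ) (γ0 γx : ℝ)
    (γc γxc c : Fin p → ℝ) (x : ℝ) :
    deriv (margLogitc p β0 βx βw βxw βc βxc γ0 γx γc γxc c) x
      = βx * (1 - (pYc p β0 βx βw βxw βc βxc c x 1 - pYc p β0 βx βw βxw βc βxc c x 0) *
                  (pWgYXc p β0 βx βw βxw βc βxc γ0 γx γc γxc c x true true -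
                   pWgYXc p β0 βx βw βxw βc βxc γ0 γx γc γxc c x false true))
        + βxw * (pWgYXc p β0 βx βw βxw βc βxc γ0 γx γc γxc c x true true -
                  (pWgYXc p β0 βx βw βxw βc βxc γ0 γx γc γxc c x true true -
                   pWgYXc p β0 βx βw βxw βc βxc γ0 γx γc γxc c x false true) *
                    pYc p β0 βx βw βxw βc βxc c x 1)
        + (γx + ∑ j, γxc j * c j) *
            (pWgYXc p β0 βx βw βxw βc βxc γ0 γx γc γxc c x true true -
             pWgYXc p β0 βx βw βxw βc βxc γ0 γx γc γxc c x false true)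
        + (1 - (pYc p β0 βx βw βxw βc βxc c x 1 - pYc p β0 βx βw βxw βc βxc c x 0) *
                (pWgYXc p β0 βx βw βxw βc βxc γ0 γx γc γxc c x true true -
                 pWgYXc p β0 βx βw βxw βc βxc γ0 γx γc γxc c x false true)) *
            ∑ j, βxc j * c j := by
  have hmarg : margLogitc p β0 βx βw βxw βc βxc γ0 γx γc γxc c = fun t =>
      mixLogOdds (pYc p β0 βx βw βxw βc βxc c t 1) (pYc p β0 βx βw βxw βc βxc c t 0)
        (pWc p γ0 γx γc γxc c t) := by
    funext t
    simp only [margLogitc, mixLogOdds, jntc_eq_mixJoint]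
  have hpost : pWgYXc p β0 βx βw βxw βc βxc γ0 γx γc γxc c x = mixPosterior
      (pYc p β0 βx βw βxw βc βxc c x 1) (pYc p β0 βx βw βxw βc βxc c x 0)
      (pWc p γ0 γx γc γxc c x) := by
    funext y w
    simp only [pWgYXc, mixPosterior, jntc_eq_mixJoint]
  obtain ⟨hm0, hm1⟩ := mix_mem_Ioo _ _ _ (expit_mem_Ioo _) (expit_mem_Ioo _) (expit_mem_Ioo _)
  rw [hmarg, hpost, (hasDerivAt_mixLogOdds (hasDerivAt_pYc p β0 βx βw βxw βc βxc c 1 x)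
    (hasDerivAt_pYc p β0 βx βw βxw βc βxc c 0 x) (hasDerivAt_pWc p γ0 γx γc γxc c x)
    hm0.ne' hm1.ne).deriv]
  ring
end
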